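/- Let a, b, c, α : (ξ, η) → ℝ be a maximal solution of the E(2) centrally flat ODE system a' = (a/2)(−a² + c²), b' = (b/2)(a² + c²), c' = (c/2)(a² − c² + 2α), α' = α·c², with a, b, c, α everywhere positive, where maximal means the solution does not extend to any strictly larger open interval. If 0 ≤ c(t)² − a(t)² ≤ 2α(t) for all t ∈ (ξ, η), then ξ = −∞, and there exists q ≥ 0 such that, as t → −∞, a(t) → q, b(t) → 0, c(t) → q, and α(t) → 0. -/

import Mathlib

/-!
All four coordinates have nonnegative derivative on `I` (this is exactly what `0 ≤ c² - a² ≤ 2α`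
and positivity give), so they are monotone and bounded below. If `I` had a finite left endpoint
`ξ`, the solution would converge as `t → ξ⁺`, and gluing on the local solution through the limit
point would extend it past `ξ`, against maximality. Hence `I` contains a half-line `(-∞, t₀]`,
and `a`, `c` converge to some `A`, `C` as `t → -∞`. The logarithmic derivatives
`α'/α = c²` and `b'/b = (a² + c²)/2` dominate either a positive constant (if `C > 0`) or
`a'/a = (c² - a²)/2` (if `C = 0`, which forces `A = 0`), so `b` and `α` tend to `0`; finally
`0 ≤ c² - a² ≤ 2α` gives `A = C`.
-/

/-- The E(2) centrally flat ODE system on a set `J`: `a' = (a/2)(−a² + c²)`,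
`b' = (b/2)(a² + c²)`, `c' = (c/2)(a² − c² + 2α)`, `α' = α·c²`. -/
def E2CentrallyFlatSystem (a b c α : ℝ → ℝ) (J : Set ℝ) : Prop :=
  (∀ t ∈ J, HasDerivAt a (a t / 2 * (-(a t) ^ 2 + (c t) ^ 2)) t) ∧
  (∀ t ∈ J, HasDerivAt b (b t / 2 * ((a t) ^ 2 + (c t) ^ 2)) t) ∧
  (∀ t ∈ J, HasDerivAt c (c t / 2 * ((a t) ^ 2 - (c t) ^ 2 + 2 * α t)) t) ∧
  (∀ t ∈ J, HasDerivAt α (α t * (c t) ^ 2) t)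

/-- A solution of the E(2) centrally flat ODE system on an open interval `I` is maximal
if it does not extend to a solution of the same system on any open interval strictly
containing `I`. -/
def E2MaximalSolution (a b c α : ℝ → ℝ) (I : Set ℝ) : Prop :=
  E2CentrallyFlatSystem a b c α I ∧
  ∀ J : Set ℝ, IsOpen J → J.OrdConnected → I ⊆ J → I ≠ J →
    ¬ ∃ a' b' c' α' : ℝ → ℝ, E2CentrallyFlatSystem a' b' c' α' J ∧
      Set.EqOn a' a I ∧ Set.EqOn b' b I ∧ Set.EqOn c' c I ∧ Set.EqOn α' α I

open Set Filter Topology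

theorem hasDerivAt_prodMk_iff {E F : Type*} [NormedAddCommGroup E] [NormedSpace ℝ E]
    [NormedAddCommGroup F] [NormedSpace ℝ F] {f : ℝ → E} {g : ℝ → F} {x : E} {y : F} {t : ℝ} :
    HasDerivAt (fun s => (f s, g s)) (x, y) t ↔ HasDerivAt f x t ∧ HasDerivAt g y t :=
  ⟨fun h => ⟨hasFDerivAt_fst.comp_hasDerivAt (l' := ContinuousLinearMap.fst ℝ E F) t h,
    hasFDerivAt_snd.comp_hasDerivAt (l' := ContinuousLinearMap.snd ℝ E F) t h⟩,
    fun h => h.1.prodMk h.2⟩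

theorem monotoneOn_of_hasDerivAt_nonneg {D : Set ℝ} (hD : Convex ℝ D) {f f' : ℝ → ℝ}
    (hf : ∀ x ∈ D, HasDerivAt f (f' x) x) (hf' : ∀ x ∈ D, 0 ≤ f' x) : MonotoneOn f D :=
  monotoneOn_of_hasDerivWithinAt_nonneg hD
    (fun x hx => (hf x hx).continuousAt.continuousWithinAt)
    (fun x hx => (hf x (interior_subset hx)).hasDerivWithinAt)
    (fun x hx => hf' x (interior_subset hx))

theorem MonotoneOn.exists_tendsto_atBot {f : ℝ → ℝ} {t₀ m : ℝ} (hf : MonotoneOn f (Iic t₀))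
    (hm : ∀ t ∈ Iic t₀, m ≤ f t) :
    ∃ L, m ≤ L ∧ Tendsto f atBot (𝓝 L) ∧ ∀ t ∈ Iic t₀, L ≤ f t := by
  have hmono : Monotone fun t => f (min t t₀) := fun x y hxy =>
    hf (min_le_right x t₀) (min_le_right y t₀) (min_le_min_right t₀ hxy)
  have hbdd : BddBelow (range fun t => f (min t t₀)) := by
    refine ⟨m, ?_⟩
    rintro _ ⟨t, rfl⟩
    exact hm _ (min_le_right t t₀)
  refine ⟨_, le_ciInf fun t => hm _ (min_le_right t t₀), ?_, fun t ht => ?_⟩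
  · refine (tendsto_atBot_ciInf hmono hbdd).congr' ?_
    filter_upwards [eventually_le_atBot t₀] with t ht
    rw [min_eq_left ht]
  · simpa only [min_eq_left (mem_Iic.1 ht)] using ciInf_le hbdd t

/-- `f/g` is nondecreasing, so `f ≤ (f t₀ / g t₀) g` on `(-∞, t₀]`. -/
theorem tendsto_atBot_zero_of_logDeriv_le {f f' g g' : ℝ → ℝ} {t₀ : ℝ}
    (hf : ∀ t ∈ Iic t₀, HasDerivAt f (f' t) t) (hg : ∀ t ∈ Iic t₀, HasDerivAt g (g' t) t)
    (hfpos : ∀ t ∈ Iic t₀, 0 < f t) (hgpos : ∀ t ∈ Iic t₀, 0 < g t)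
    (hle : ∀ t ∈ Iic t₀, g' t / g t ≤ f' t / f t) (hg0 : Tendsto g atBot (𝓝 0)) :
    Tendsto f atBot (𝓝 0) := by
  have hmono : MonotoneOn (fun t => Real.log (f t) - Real.log (g t)) (Iic t₀) :=
    monotoneOn_of_hasDerivAt_nonneg (convex_Iic t₀)
      (fun t ht => ((hf t ht).log (hfpos t ht).ne').sub ((hg t ht).log (hgpos t ht).ne'))
      (fun t ht => sub_nonneg.2 (hle t ht))
  have hbound : ∀ t ∈ Iic t₀, f t ≤ f t₀ / g t₀ * g t := by
    intro t ht
    have hlog : Real.log (f t) - Real.log (g t) ≤ Real.log (f t₀) - Real.log (g t₀) :=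
      hmono ht self_mem_Iic ht
    have hf₀ := hfpos t₀ self_mem_Iic
    have hg₀ := hgpos t₀ self_mem_Iic
    rw [← Real.log_div (hfpos t ht).ne' (hgpos t ht).ne', ← Real.log_div hf₀.ne' hg₀.ne',
      Real.log_le_log_iff (div_pos (hfpos t ht) (hgpos t ht)) (div_pos hf₀ hg₀),
      div_le_iff₀ (hgpos t ht)] at hlog
    exact hlog
  have hlim : Tendsto (fun t => f t₀ / g t₀ * g t) atBot (𝓝 0) := by
    simpa using hg0.const_mul (f t₀ / g t₀)
  refine tendsto_of_tendsto_of_tendsto_of_le_of_le' tendsto_const_nhds hlim ?_ ?_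
  · filter_upwards [eventually_le_atBot t₀] with t ht
    exact (hfpos t ht).le
  · filter_upwards [eventually_le_atBot t₀] with t ht
    exact hbound t ht

theorem tendsto_atBot_zero_of_le_logDeriv {f f' : ℝ → ℝ} {t₀ r : ℝ} (hr : 0 < r)
    (hf : ∀ t ∈ Iic t₀, HasDerivAt f (f' t) t) (hfpos : ∀ t ∈ Iic t₀, 0 < f t)
    (hle : ∀ t ∈ Iic t₀, r ≤ f' t / f t) : Tendsto f atBot (𝓝 0) := by
  refine tendsto_atBot_zero_of_logDeriv_le hf (g := fun t => Real.exp (r * t))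
    (fun t _ => ((hasDerivAt_id t).const_mul r).exp) hfpos (fun t _ => Real.exp_pos _)
    (fun t ht => ?_) (Real.tendsto_exp_atBot.comp (tendsto_id.const_mul_atBot hr))
  simpa [mul_div_cancel_left₀ _ (Real.exp_pos _).ne'] using hle t ht

theorem IsOpen.subset_Ioi_csInf {I : Set ℝ} (hI : IsOpen I) (hbdd : BddBelow I) :
    I ⊆ Ioi (sInf I) := fun t ht => by
  obtain ⟨s, hst, hs⟩ := Filter.Eventually.exists_lt (hI.mem_nhds ht : ∀ᶠ s in 𝓝 t, s ∈ I)
  exact (csInf_le hbdd hs).trans_lt hst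

theorem Set.OrdConnected.Ioc_csInf_subset {I : Set ℝ} (hI : I.OrdConnected) {t₀ : ℝ}
    (ht₀ : t₀ ∈ I) : Ioc (sInf I) t₀ ⊆ I := fun t ht => by
  obtain ⟨s, hs, hst⟩ := exists_lt_of_csInf_lt ⟨t₀, ht₀⟩ ht.1
  exact hI.out hs ht₀ ⟨hst.le, ht.2⟩

section

variable {E : Type*} [NormedAddCommGroup E] [NormedSpace ℝ E]

theorem hasDerivWithinAt_Ici_of_tendsto_hasDerivAt {f f' : ℝ → E} {a b : ℝ} {e : E}
    (hab : a < b) (hf : ∀ t ∈ Ioo a b, HasDerivAt f (f' t) t)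
    (hcont : ContinuousWithinAt f (Ici a) a) (hf' : Tendsto f' (𝓝[>] a) (𝓝 e)) :
    HasDerivWithinAt f e (Ici a) a := by
  refine hasDerivWithinAt_Ici_of_tendsto_deriv
    (fun t ht => (hf t ht).differentiableAt.differentiableWithinAt)
    (hcont.mono (Ioo_subset_Ioi_self.trans Ioi_subset_Ici_self)) (Ioo_mem_nhdsGT hab)
    (hf'.congr' ?_)
  filter_upwards [Ioo_mem_nhdsGT hab] with t ht
  exact (hf t ht).deriv.symm

variable {F : E → E} {x₀ : E}

theorem eventuallyEq_nhdsGE_of_hasDerivWithinAt_Ici (hF : ContDiffAt ℝ 1 F x₀) {f g : ℝ → E}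
    {ξ : ℝ}
    (hf : ∀ᶠ t in 𝓝[≥] ξ, ContinuousWithinAt f (Ici ξ) t ∧ HasDerivWithinAt f (F (f t)) (Ici t) t)
    (hg : ∀ᶠ t in 𝓝[≥] ξ, ContinuousWithinAt g (Ici ξ) t ∧ HasDerivWithinAt g (F (g t)) (Ici t) t)
    (hfξ : f ξ = x₀) (hgξ : g ξ = x₀) : f =ᶠ[𝓝[≥] ξ] g := by
  obtain ⟨K, s, hs, hlip⟩ := hF.exists_lipschitzOnWith
  have hfs := (hf.self_of_nhdsWithin self_mem_Ici).1.eventually_mem (hfξ ▸ hs)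
  have hgs := (hg.self_of_nhdsWithin self_mem_Ici).1.eventually_mem (hgξ ▸ hs)
  obtain ⟨t₁, hξt₁, hgood⟩ :=
    mem_nhdsGE_iff_exists_Ico_subset.1 (hf.and (hg.and (hfs.and hgs)))
  filter_upwards [Ico_mem_nhdsGE hξt₁] with t ht
  have hgood' : ∀ r ∈ Icc ξ t, _ := fun r hr => hgood (Icc_subset_Ico_right ht.2 hr)
  exact ODE_solution_unique_of_mem_Icc_right (v := fun _ => F) (s := fun _ => s)
    (fun _ _ => hlip) (fun r hr => (hgood' r hr).1.1.mono Icc_subset_Ici_self)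
    (fun r hr => (hgood' r (Ico_subset_Icc_self hr)).1.2)
    (fun r hr => (hgood' r (Ico_subset_Icc_self hr)).2.2.1)
    (fun r hr => (hgood' r hr).2.1.1.mono Icc_subset_Ici_self)
    (fun r hr => (hgood' r (Ico_subset_Icc_self hr)).2.1.2)
    (fun r hr => (hgood' r (Ico_subset_Icc_self hr)).2.2.2) (hfξ.trans hgξ.symm)
    (right_mem_Icc.2 ht.1)

variable [CompleteSpace E]

/-- The solution is glued at `ξ` to the local solution through `(ξ, x₀)`; the two agree just
right of `ξ` by uniqueness. -/
theorem exists_hasDerivAt_extension_left (hF : ContDiffAt ℝ 1 F x₀) {X : ℝ → E} {ξ u : ℝ}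
    (hξu : ξ < u) (hX : ∀ t ∈ Ioo ξ u, HasDerivAt X (F (X t)) t)
    (hlim : Tendsto X (𝓝[>] ξ) (𝓝 x₀)) :
    ∃ ε > 0, ∃ Y : ℝ → E,
      EqOn Y X (Ioi ξ) ∧ ∀ t ∈ Ioo (ξ - ε) u, HasDerivAt Y (F (Y t)) t := by
  obtain ⟨g, hgξ, ε, hε, hg⟩ :=
    hF.exists_forall_mem_closedBall_exists_eq_forall_mem_Ioo_hasDerivAt₀ ξ
  set Y : ℝ → E := fun t => if ξ < t then X t else g t
  have hYX : EqOn Y X (Ioi ξ) := fun t ht => if_pos ht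
  have hYξ : Y ξ = x₀ := (if_neg (lt_irrefl ξ)).trans hgξ
  have hY : ∀ t ∈ Ioo ξ u, HasDerivAt Y (F (Y t)) t := fun t ht => by
    rw [hYX ht.1]
    exact (hX t ht).congr_of_eventuallyEq (hYX.eventuallyEq_of_mem (Ioi_mem_nhds ht.1))
  have hYlim : Tendsto Y (𝓝[>] ξ) (𝓝 x₀) :=
    hlim.congr' (eventually_nhdsWithin_of_forall fun t ht => (hYX ht).symm)
  have hYcont : ContinuousWithinAt Y (Ici ξ) ξ := by
    rwa [← continuousWithinAt_Ioi_iff_Ici, ContinuousWithinAt, hYξ]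
  have hYg : Y =ᶠ[𝓝[≥] ξ] g := by
    refine eventuallyEq_nhdsGE_of_hasDerivWithinAt_Ici hF ?_ ?_ hYξ hgξ
    · filter_upwards [Ico_mem_nhdsGE hξu] with t ht
      rcases ht.1.eq_or_lt with rfl | hξt
      · exact ⟨hYcont, hYξ ▸ hasDerivWithinAt_Ici_of_tendsto_hasDerivAt hξu hY hYcont
          (hF.continuousAt.tendsto.comp hYlim)⟩
      · have := hY t ⟨hξt, ht.2⟩
        exact ⟨this.continuousAt.continuousWithinAt, this.hasDerivWithinAt⟩
    · have hξε : Ioo (ξ - ε) (ξ + ε) ∈ 𝓝 ξ :=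
        Ioo_mem_nhds (sub_lt_self ξ hε) (lt_add_of_pos_right ξ hε)
      filter_upwards [nhdsWithin_le_nhds hξε] with t ht
      exact ⟨(hg t ht).continuousAt.continuousWithinAt, (hg t ht).hasDerivWithinAt⟩
  obtain ⟨t₁, hξt₁, hYg⟩ := mem_nhdsGE_iff_exists_Ico_subset.1 hYg
  have hYg' : EqOn Y g (Ioo (ξ - ε) t₁) := fun t ht => by
    rcases le_or_gt t ξ with h | h
    · exact if_neg h.not_gt
    · exact hYg ⟨h.le, ht.2⟩
  refine ⟨ε, hε, Y, hYX, fun t ht => ?_⟩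
  rcases lt_or_ge ξ t with h | h
  · exact hY t ⟨h, ht.2⟩
  · have htg : t ∈ Ioo (ξ - ε) t₁ := ⟨ht.1, h.trans_lt hξt₁⟩
    rw [hYg' htg]
    exact (hg t ⟨ht.1, by linarith⟩).congr_of_eventuallyEq
      (hYg'.eventuallyEq_of_mem (Ioo_mem_nhds htg.1 htg.2))

theorem exists_hasDerivAt_extension_of_tendsto_csInf (hF : ContDiffAt ℝ 1 F x₀) {I : Set ℝ}
    (hIopen : IsOpen I) (hIconn : I.OrdConnected) (hne : I.Nonempty) (hbdd : BddBelow I)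
    {X : ℝ → E} (hX : ∀ t ∈ I, HasDerivAt X (F (X t)) t)
    (hlim : Tendsto X (𝓝[>] sInf I) (𝓝 x₀)) :
    ∃ J, IsOpen J ∧ J.OrdConnected ∧ I ⊂ J ∧
      ∃ Y : ℝ → E, EqOn Y X I ∧ ∀ t ∈ J, HasDerivAt Y (F (Y t)) t := by
  obtain ⟨t₀, ht₀⟩ := hne
  have hIξ := hIopen.subset_Ioi_csInf hbdd
  have hIoc := hIconn.Ioc_csInf_subset ht₀
  have hξt₀ : sInf I < t₀ := hIξ ht₀
  obtain ⟨ε, hε, Y, hYX, hY⟩ := exists_hasDerivAt_extension_left hF hξt₀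
    (fun t ht => hX t (hIoc (Ioo_subset_Ioc_self ht))) hlim
  have hmid : (sInf I + t₀) / 2 ∈ Ioo (sInf I) t₀ := ⟨by linarith, by linarith⟩
  refine ⟨I ∪ Ioo (sInf I - ε) t₀, hIopen.union isOpen_Ioo, ?_, ?_, Y, hYX.mono hIξ, ?_⟩
  · rw [← isPreconnected_iff_ordConnected]
    exact hIconn.isPreconnected.union' ⟨_, hIoc (Ioo_subset_Ioc_self hmid),
      Ioo_subset_Ioo_left (by linarith) hmid⟩ isPreconnected_Ioo
  · refine (ssubset_iff_of_subset subset_union_left).2 ⟨sInf I, Or.inr ⟨by linarith, hξt₀⟩,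
      fun h => lt_irrefl _ (mem_Ioi.1 (hIξ h))⟩
  · rintro t (ht | ht)
    · rw [hYX (hIξ ht)]
      exact (hX t ht).congr_of_eventuallyEq (hYX.eventuallyEq_of_mem (Ioi_mem_nhds (hIξ ht)))
    · exact hY t ht

end

noncomputable def e2Field (x : ℝ × ℝ × ℝ × ℝ) : ℝ × ℝ × ℝ × ℝ :=
  (x.1 / 2 * (-x.1 ^ 2 + x.2.2.1 ^ 2), x.2.1 / 2 * (x.1 ^ 2 + x.2.2.1 ^ 2),
    x.2.2.1 / 2 * (x.1 ^ 2 - x.2.2.1 ^ 2 + 2 * x.2.2.2), x.2.2.2 * x.2.2.1 ^ 2)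

theorem contDiff_e2Field : ContDiff ℝ 1 e2Field := by
  unfold e2Field
  fun_prop

section

variable {a b c α : ℝ → ℝ} {I J : Set ℝ}

theorem e2CentrallyFlatSystem_iff :
    E2CentrallyFlatSystem a b c α J ↔
      ∀ t ∈ J, HasDerivAt (fun s => (a s, b s, c s, α s)) (e2Field (a t, b t, c t, α t)) t := by
  simp only [E2CentrallyFlatSystem, e2Field, hasDerivAt_prodMk_iff, forall₂_and]

theorem E2CentrallyFlatSystem.mono (h : E2CentrallyFlatSystem a b c α I) (hJI : J ⊆ I) :
    E2CentrallyFlatSystem a b c α J :=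
  ⟨fun t ht => h.1 t (hJI ht), fun t ht => h.2.1 t (hJI ht), fun t ht => h.2.2.1 t (hJI ht),
    fun t ht => h.2.2.2 t (hJI ht)⟩

theorem E2CentrallyFlatSystem.monotoneOn (h : E2CentrallyFlatSystem a b c α I)
    (hI : Convex ℝ I) (ha : ∀ t ∈ I, 0 ≤ a t) (hb : ∀ t ∈ I, 0 ≤ b t) (hc : ∀ t ∈ I, 0 ≤ c t)
    (hα : ∀ t ∈ I, 0 ≤ α t)
    (hineq : ∀ t ∈ I, 0 ≤ (c t) ^ 2 - (a t) ^ 2 ∧ (c t) ^ 2 - (a t) ^ 2 ≤ 2 * α t) :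
    MonotoneOn a I ∧ MonotoneOn b I ∧ MonotoneOn c I ∧ MonotoneOn α I := by
  obtain ⟨ha', hb', hc', hα'⟩ := h
  exact ⟨monotoneOn_of_hasDerivAt_nonneg hI ha' fun t ht =>
      mul_nonneg (div_nonneg (ha t ht) zero_le_two) (by linarith [(hineq t ht).1]),
    monotoneOn_of_hasDerivAt_nonneg hI hb' fun t ht =>
      mul_nonneg (div_nonneg (hb t ht) zero_le_two) (by positivity),
    monotoneOn_of_hasDerivAt_nonneg hI hc' fun t ht =>
      mul_nonneg (div_nonneg (hc t ht) zero_le_two) (by linarith [(hineq t ht).2]),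
    monotoneOn_of_hasDerivAt_nonneg hI hα' fun t ht => mul_nonneg (hα t ht) (sq_nonneg _)⟩

theorem not_e2MaximalSolution_of_bddBelow (hIopen : IsOpen I) (hIconn : I.OrdConnected)
    (hne : I.Nonempty) (hbdd : BddBelow I) (ha : ∀ t ∈ I, 0 ≤ a t) (hb : ∀ t ∈ I, 0 ≤ b t)
    (hc : ∀ t ∈ I, 0 ≤ c t) (hα : ∀ t ∈ I, 0 ≤ α t)
    (hineq : ∀ t ∈ I, 0 ≤ (c t) ^ 2 - (a t) ^ 2 ∧ (c t) ^ 2 - (a t) ^ 2 ≤ 2 * α t) :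
    ¬ E2MaximalSolution a b c α I := by
  rintro ⟨hsys, hmax⟩
  obtain ⟨t₀, ht₀⟩ := hne
  have hIoo : Ioo (sInf I) t₀ ⊆ I := Ioo_subset_Ioc_self.trans (hIconn.Ioc_csInf_subset ht₀)
  have hlim : ∀ f : ℝ → ℝ, MonotoneOn f I → (∀ t ∈ I, 0 ≤ f t) →
      ∃ L, Tendsto f (𝓝[>] sInf I) (𝓝 L) := fun f hf hf0 =>
    ⟨_, (hf.mono hIoo).tendsto_nhdsWithin_Ioo_right
      (nonempty_Ioo.2 (hIopen.subset_Ioi_csInf hbdd ht₀))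
      ⟨0, by rintro _ ⟨t, ht, rfl⟩; exact hf0 t (hIoo ht)⟩⟩
  obtain ⟨hma, hmb, hmc, hmα⟩ := hsys.monotoneOn hIconn.convex ha hb hc hα hineq
  obtain ⟨A, hA⟩ := hlim a hma ha
  obtain ⟨B, hB⟩ := hlim b hmb hb
  obtain ⟨C, hC⟩ := hlim c hmc hc
  obtain ⟨D, hD⟩ := hlim α hmα hα
  obtain ⟨J, hJopen, hJconn, hIJ, Y, hYX, hY⟩ :=
    exists_hasDerivAt_extension_of_tendsto_csInf contDiff_e2Field.contDiffAt hIopen hIconn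
      ⟨t₀, ht₀⟩ hbdd (e2CentrallyFlatSystem_iff.1 hsys)
      (hA.prodMk_nhds (hB.prodMk_nhds (hC.prodMk_nhds hD)))
  exact hmax J hJopen hJconn hIJ.subset hIJ.ne
    ⟨fun t => (Y t).1, fun t => (Y t).2.1, fun t => (Y t).2.2.1, fun t => (Y t).2.2.2,
      e2CentrallyFlatSystem_iff.2 hY, fun t ht => congrArg Prod.fst (hYX ht),
      fun t ht => congrArg (·.2.1) (hYX ht), fun t ht => congrArg (·.2.2.1) (hYX ht),
      fun t ht => congrArg (·.2.2.2) (hYX ht)⟩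

variable {t₀ : ℝ}

theorem E2CentrallyFlatSystem.tendsto_b_α_atBot_of_le_c
    (h : E2CentrallyFlatSystem a b c α (Iic t₀))
    {C : ℝ} (hC : 0 < C) (hCc : ∀ t ∈ Iic t₀, C ≤ c t) (hb : ∀ t ∈ Iic t₀, 0 < b t)
    (hα : ∀ t ∈ Iic t₀, 0 < α t) :
    Tendsto b atBot (𝓝 0) ∧ Tendsto α atBot (𝓝 0) := by
  have hc2 : ∀ t ∈ Iic t₀, C ^ 2 ≤ c t ^ 2 := fun t ht => pow_le_pow_left₀ hC.le (hCc t ht) 2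
  refine ⟨tendsto_atBot_zero_of_le_logDeriv (by positivity : 0 < C ^ 2 / 2) h.2.1 hb
      fun t ht => ?_,
    tendsto_atBot_zero_of_le_logDeriv (by positivity : 0 < C ^ 2) h.2.2.2 hα fun t ht => ?_⟩
  · have := (hb t ht).ne'
    field_simp
    linarith [hc2 t ht, sq_nonneg (a t)]
  · rw [mul_div_cancel_left₀ _ (hα t ht).ne']
    exact hc2 t ht

theorem E2CentrallyFlatSystem.tendsto_b_α_atBot_of_tendsto_a
    (h : E2CentrallyFlatSystem a b c α (Iic t₀))
    (ha : ∀ t ∈ Iic t₀, 0 < a t) (hb : ∀ t ∈ Iic t₀, 0 < b t) (hα : ∀ t ∈ Iic t₀, 0 < α t)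
    (ha0 : Tendsto a atBot (𝓝 0)) :
    Tendsto b atBot (𝓝 0) ∧ Tendsto α atBot (𝓝 0) := by
  refine ⟨tendsto_atBot_zero_of_logDeriv_le h.2.1 h.1 hb ha (fun t ht => ?_) ha0,
    tendsto_atBot_zero_of_logDeriv_le h.2.2.2 h.1 hα ha (fun t ht => ?_) ha0⟩
  · have := (ha t ht).ne'
    have := (hb t ht).ne'
    field_simp
    linarith [sq_nonneg (a t)]
  · have := (ha t ht).ne'
    have := (hα t ht).ne'
    field_simp
    linarith [sq_nonneg (a t), sq_nonneg (c t)]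

theorem E2CentrallyFlatSystem.exists_tendsto_atBot
    (h : E2CentrallyFlatSystem a b c α (Iic t₀))
    (ha : ∀ t ∈ Iic t₀, 0 < a t) (hb : ∀ t ∈ Iic t₀, 0 < b t) (hc : ∀ t ∈ Iic t₀, 0 < c t)
    (hα : ∀ t ∈ Iic t₀, 0 < α t)
    (hineq : ∀ t ∈ Iic t₀, 0 ≤ (c t) ^ 2 - (a t) ^ 2 ∧ (c t) ^ 2 - (a t) ^ 2 ≤ 2 * α t) :
    ∃ q : ℝ, 0 ≤ q ∧ Tendsto a atBot (𝓝 q) ∧ Tendsto b atBot (𝓝 0) ∧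
      Tendsto c atBot (𝓝 q) ∧ Tendsto α atBot (𝓝 0) := by
  obtain ⟨hma, -, hmc, -⟩ := h.monotoneOn (convex_Iic t₀) (fun t ht => (ha t ht).le)
    (fun t ht => (hb t ht).le) (fun t ht => (hc t ht).le) (fun t ht => (hα t ht).le) hineq
  obtain ⟨A, hA0, hA, -⟩ := hma.exists_tendsto_atBot fun t ht => (ha t ht).le
  obtain ⟨C, hC0, hC, hCc⟩ := hmc.exists_tendsto_atBot fun t ht => (hc t ht).le
  have hbα : Tendsto b atBot (𝓝 0) ∧ Tendsto α atBot (𝓝 0) := by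
    rcases hC0.eq_or_lt with rfl | hCpos
    · have hAC : A ≤ 0 := le_of_tendsto_of_tendsto hA hC <| by
        filter_upwards [eventually_le_atBot t₀] with t ht
        exact (pow_le_pow_iff_left₀ (ha t ht).le (hc t ht).le two_ne_zero).1
          (sub_nonneg.1 (hineq t ht).1)
      exact h.tendsto_b_α_atBot_of_tendsto_a ha hb hα (le_antisymm hAC hA0 ▸ hA)
    · exact h.tendsto_b_α_atBot_of_le_c hCpos hCc hb hα
  have hgap : Tendsto (fun t => c t ^ 2 - a t ^ 2) atBot (𝓝 0) := by
    refine tendsto_of_tendsto_of_tendsto_of_le_of_le' tendsto_const_nhds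
      (by simpa using hbα.2.const_mul 2) ?_ ?_
    all_goals filter_upwards [eventually_le_atBot t₀] with t ht
    exacts [(hineq t ht).1, (hineq t ht).2]
  have hAC : A = C := by
    have := tendsto_nhds_unique ((hC.pow 2).sub (hA.pow 2)) hgap
    exact (pow_left_inj₀ hA0 hC0 two_ne_zero).1 (by linarith)
  exact ⟨C, hC0, hAC ▸ hA, hbα.1, hC, hbα.2⟩

end

/-- For a maximal positive solution of the E(2) centrally flat system on
an open interval `(ξ, η)` satisfying `0 ≤ c² − a² ≤ 2α` throughout, the left endpoint
is `ξ = −∞` (the interval is unbounded below), and as `t → −∞` the solution converges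
to an equilibrium `(q, 0, q, 0)` with `q ≥ 0`. -/
theorem e2_case3_left_endpoint_minus_infinity_and_limit
    (I : Set ℝ) (hIopen : IsOpen I) (hIconn : I.OrdConnected) (hne : I.Nonempty)
    (a b c α : ℝ → ℝ)
    (hmax : E2MaximalSolution a b c α I)
    (hapos : ∀ t ∈ I, 0 < a t) (hbpos : ∀ t ∈ I, 0 < b t)
    (hcpos : ∀ t ∈ I, 0 < c t) (hαpos : ∀ t ∈ I, 0 < α t)
    (hineq : ∀ t ∈ I, 0 ≤ (c t) ^ 2 - (a t) ^ 2 ∧ (c t) ^ 2 - (a t) ^ 2 ≤ 2 * α t) :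
    ¬ BddBelow I ∧
    ∃ q : ℝ, 0 ≤ q ∧
      Filter.Tendsto a Filter.atBot (nhds q) ∧
      Filter.Tendsto b Filter.atBot (nhds 0) ∧
      Filter.Tendsto c Filter.atBot (nhds q) ∧
      Filter.Tendsto α Filter.atBot (nhds 0) := by
  have hunbdd : ¬ BddBelow I := fun hbdd =>
    not_e2MaximalSolution_of_bddBelow hIopen hIconn hne hbdd (fun t ht => (hapos t ht).le)
      (fun t ht => (hbpos t ht).le) (fun t ht => (hcpos t ht).le) (fun t ht => (hαpos t ht).le)
      hineq hmax
  obtain ⟨t₀, ht₀⟩ := hne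
  have hIic : Iic t₀ ⊆ I := fun t ht => by
    obtain ⟨s, hs, hst⟩ := not_bddBelow_iff.1 hunbdd t
    exact hIconn.out hs ht₀ ⟨hst.le, ht⟩
  exact ⟨hunbdd, (hmax.1.mono hIic).exists_tendsto_atBot (fun t ht => hapos t (hIic ht))
    (fun t ht => hbpos t (hIic ht)) (fun t ht => hcpos t (hIic ht))
    (fun t ht => hαpos t (hIic ht)) fun t ht => hineq t (hIic ht)⟩
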